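/- Suppose additionally that within each row the X_{n,1}, …, X_{n,n} are independent, and define G_n(θ,z) := (nΔ_n)^{−1/2} Σ_{j=1}^{⌊nθ⌋} ( 1_{{X_{n,j} ≥ z}} − P_n(X_{n,j} ≥ z) ). Then for all θ_1, θ_2 ∈ [0,1] and all z_1, z_2 ≥ a, E[ G_n(θ_1,z_1) · G_n(θ_2,z_2) ] → (θ_1 ∧ θ_2) · ν(z_1 ∨ z_2) as n → ∞. -/

import Mathlib

/-!
By rowwise independence only the diagonal terms survive in the covariance of the two partial
sums, so `E[G_n(θ₁,z₁) G_n(θ₂,z₂)]` equals `(nΔ_n)⁻¹` times the sum over `j < ⌊nθ₁⌋ ∧ ⌊nθ₂⌋` of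
`P(X_{n,j} ≥ z₁ ∨ z₂) - P(X_{n,j} ≥ z₁) P(X_{n,j} ≥ z₂)`. By the tail estimate each summand is
`Δ_n ν(z₁ ∨ z₂) + O(Δ_n²)`: the product of the two probabilities is `O(Δ_n²)` because `ν ≤ ν(a)`
on `[a, ∞)`. Hence the covariance is `(⌊nθ₁⌋ ∧ ⌊nθ₂⌋)/n · ν(z₁ ∨ z₂) + O(Δ_n)`.
-/

open MeasureTheory Filter ProbabilityTheory Finset

section Covariance

variable {Ω ι : Type*} [MeasurableSpace Ω] {μ : Measure Ω}

lemma covariance_fun_sum_fun_sum_of_indepFun [IsFiniteMeasure μ] [DecidableEq ι] {Y Z : ι → Ω → ℝ}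
    {s t : Finset ι} (hY : ∀ i ∈ s, MemLp (Y i) 2 μ) (hZ : ∀ j ∈ t, MemLp (Z j) 2 μ)
    (hindep : ∀ i ∈ s, ∀ j ∈ t, i ≠ j → Y i ⟂ᵢ[μ] Z j) :
    cov[fun ω ↦ ∑ i ∈ s, Y i ω, fun ω ↦ ∑ j ∈ t, Z j ω; μ] = ∑ i ∈ s ∩ t, cov[Y i, Z i; μ] := by
  rw [covariance_fun_sum_fun_sum' hY hZ, ← sum_ite_mem]
  refine sum_congr rfl fun i hi ↦ ?_
  have hoff : ∀ j ∈ t, j ≠ i → cov[Y i, Z j; μ] = 0 := fun j hj hji ↦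
    (hindep i hi j hj hji.symm).covariance_eq_zero (hY i hi) (hZ j hj)
  by_cases hit : i ∈ t
  · rw [if_pos hit, sum_eq_single_of_mem i hit hoff]
  · rw [if_neg hit, sum_eq_zero fun j hj ↦ hoff j hj (ne_of_mem_of_not_mem hj hit)]

variable {Y : Ω → ℝ}

lemma integral_ite_le (hY : Measurable Y) (z : ℝ) :
    ∫ ω, (if z ≤ Y ω then 1 else 0 : ℝ) ∂μ = (μ {ω | z ≤ Y ω}).toReal := by
  simpa [Set.indicator_apply, measureReal_def] using
    integral_indicator_one (μ := μ) (measurableSet_le measurable_const hY)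

lemma memLp_ite_le [IsFiniteMeasure μ] (hY : Measurable Y) (z : ℝ) (p : ENNReal) :
    MemLp (fun ω ↦ if z ≤ Y ω then (1 : ℝ) else 0) p μ := by
  convert memLp_indicator_const p (measurableSet_le (measurable_const (a := z)) hY) (1 : ℝ)
    (Or.inr (measure_ne_top μ _)) using 1
  ext ω
  simp [Set.indicator_apply]

lemma covariance_ite_le_ite_le [IsProbabilityMeasure μ] (hY : Measurable Y) (z₁ z₂ : ℝ) :
    cov[fun ω ↦ if z₁ ≤ Y ω then (1 : ℝ) else 0, fun ω ↦ if z₂ ≤ Y ω then (1 : ℝ) else 0; μ] =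
      (μ {ω | max z₁ z₂ ≤ Y ω}).toReal
        - (μ {ω | z₁ ≤ Y ω}).toReal * (μ {ω | z₂ ≤ Y ω}).toReal := by
  have hprod : ((fun ω ↦ if z₁ ≤ Y ω then (1 : ℝ) else 0) * fun ω ↦ if z₂ ≤ Y ω then 1 else 0) =
      fun ω ↦ if max z₁ z₂ ≤ Y ω then 1 else 0 := by
    ext ω; by_cases h₁ : z₁ ≤ Y ω <;> by_cases h₂ : z₂ ≤ Y ω <;> simp [h₁, h₂]
  rw [covariance_eq_sub (memLp_ite_le hY z₁ 2) (memLp_ite_le hY z₂ 2), hprod,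
    integral_ite_le hY, integral_ite_le hY, integral_ite_le hY]

lemma integral_sum_centered_ite_le_mul_sum [DecidableEq ι] [IsProbabilityMeasure μ]
    {X : ι → Ω → ℝ} (hX : ∀ i, Measurable (X i)) (hindep : iIndepFun X μ)
    (s t : Finset ι) (z₁ z₂ : ℝ) :
    ∫ ω, (∑ i ∈ s, ((if z₁ ≤ X i ω then 1 else 0) - (μ {ω' | z₁ ≤ X i ω'}).toReal)) *
        (∑ j ∈ t, ((if z₂ ≤ X j ω then 1 else 0) - (μ {ω' | z₂ ≤ X j ω'}).toReal)) ∂μ =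
      ∑ i ∈ s ∩ t, ((μ {ω | max z₁ z₂ ≤ X i ω}).toReal
        - (μ {ω | z₁ ≤ X i ω}).toReal * (μ {ω | z₂ ≤ X i ω}).toReal) := by
  set T : ℝ → Finset ι → Ω → ℝ := fun z s ω ↦ ∑ i ∈ s, if z ≤ X i ω then 1 else 0
  have hmean : ∀ z s, μ[T z s] = ∑ i ∈ s, (μ {ω | z ≤ X i ω}).toReal := fun z s ↦ by
    rw [integral_finsetSum _ fun i _ ↦ (memLp_ite_le (hX i) z 1).integrable le_rfl]
    exact sum_congr rfl fun i _ ↦ integral_ite_le (hX i) z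
  have hind : ∀ z, Measurable fun x : ℝ ↦ if z ≤ x then (1 : ℝ) else 0 := fun z ↦
    Measurable.ite measurableSet_Ici measurable_const measurable_const
  -- the centred sums are `T z s - μ[T z s]`, so the integral is a covariance
  calc _ = cov[T z₁ s, T z₂ t; μ] := by
        simp only [covariance, hmean, T, sum_sub_distrib]
    _ = _ := by
      rw [covariance_fun_sum_fun_sum_of_indepFun (fun i _ ↦ memLp_ite_le (hX i) z₁ 2)
        (fun j _ ↦ memLp_ite_le (hX j) z₂ 2)
        (fun i _ j _ hij ↦ (hindep.indepFun hij).comp (hind z₁) (hind z₂))]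
      exact sum_congr rfl fun i _ ↦ covariance_ite_le_ite_le (hX i) z₁ z₂

end Covariance

section Estimates

lemma abs_sub_mul_sub_le_add_sq {r c p q ε E : ℝ} (hr : |r - c| ≤ ε) (hp : 0 ≤ p) (hpE : p ≤ E)
    (hq : 0 ≤ q) (hqE : q ≤ E) : |r - p * q - c| ≤ ε + E ^ 2 := by
  have hpq : p * q ≤ E ^ 2 := pow_two E ▸ mul_le_mul hpE hqE hq (hp.trans hpE)
  rw [abs_le] at hr ⊢
  constructor <;> nlinarith [mul_nonneg hp hq]

lemma abs_sub_mul_sub_le_of_tail_estimate {a Δ K : ℝ} {ν p : ℝ → ℝ}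
    (hν : AntitoneOn ν (Set.Ici a)) (hΔ : 0 ≤ Δ) (hp : ∀ z, 0 ≤ p z)
    (htail : ∀ z, a ≤ z → |p z - Δ * ν z| ≤ K * Δ ^ 2) {z₁ z₂ : ℝ} (hz₁ : a ≤ z₁) (hz₂ : a ≤ z₂) :
    |p (max z₁ z₂) - p z₁ * p z₂ - Δ * ν (max z₁ z₂)| ≤ Δ ^ 2 * (K + (ν a + K * Δ) ^ 2) := by
  have hle : ∀ z, a ≤ z → p z ≤ Δ * (ν a + K * Δ) := fun z hz ↦ by
    have := (abs_le.1 (htail z hz)).2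
    have := mul_le_mul_of_nonneg_left (hν Set.self_mem_Ici hz hz) hΔ
    nlinarith
  calc _ ≤ K * Δ ^ 2 + (Δ * (ν a + K * Δ)) ^ 2 :=
        abs_sub_mul_sub_le_add_sq (htail _ (hz₁.trans (le_max_left _ _))) (hp _) (hle _ hz₁)
          (hp _) (hle _ hz₂)
    _ = _ := by ring

lemma abs_inv_mul_sum_sub_card_div_mul_le {ι : Type*} {s : Finset ι} {r : ι → ℝ} {N D c e : ℝ}
    (hN : 0 < N) (hs : (#s : ℝ) ≤ N) (hD : 0 < D) (he : 0 ≤ e)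
    (hr : ∀ i ∈ s, |r i - D * c| ≤ D ^ 2 * e) :
    |(N * D)⁻¹ * ∑ i ∈ s, r i - #s / N * c| ≤ D * e := by
  have hsum : |∑ i ∈ s, (r i - D * c)| ≤ N * (D ^ 2 * e) :=
    calc _ ≤ ∑ i ∈ s, |r i - D * c| := abs_sum_le_sum_abs _ _
      _ ≤ ∑ _i ∈ s, D ^ 2 * e := sum_le_sum hr
      _ = #s * (D ^ 2 * e) := by rw [sum_const, nsmul_eq_mul]
      _ ≤ N * (D ^ 2 * e) := by gcongr
  have hcentered : (N * D)⁻¹ * ∑ i ∈ s, r i - #s / N * c = (N * D)⁻¹ * ∑ i ∈ s, (r i - D * c) := by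
    rw [sum_sub_distrib, sum_const, nsmul_eq_mul]
    field_simp
  calc _ = (N * D)⁻¹ * |∑ i ∈ s, (r i - D * c)| := by
        rw [hcentered, abs_mul, abs_of_pos (inv_pos.2 (mul_pos hN hD))]
    _ ≤ (N * D)⁻¹ * (N * (D ^ 2 * e)) := by gcongr
    _ = D * e := by field_simp

end Estimates

theorem stmt5_general (a : ℝ) (ν : ℝ → ℝ)
    (hνmono : AntitoneOn ν (Set.Ici a))
    (Ω : ℕ → Type*) [∀ n, MeasurableSpace (Ω n)]
    (P : ∀ n, Measure (Ω n)) [∀ n, IsProbabilityMeasure (P n)]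
    (Δ : ℕ → ℝ) (hΔpos : ∀ n, 0 < Δ n)
    (hΔ0 : Tendsto Δ atTop (nhds 0))
    (K : ℝ) (hK : 0 < K)
    (X : ∀ n, Fin n → Ω n → ℝ) (hX : ∀ n j, Measurable (X n j))
    (hindep : ∀ n, ProbabilityTheory.iIndepFun (X n) (P n))
    (htail : ∀ n : ℕ, 1 ≤ n → ∀ j : Fin n, ∀ z, a ≤ z →
      |((P n) {ω | z ≤ X n j ω}).toReal - Δ n * ν z| ≤ K * (Δ n) ^ 2)
    (θ₁ θ₂ : ℝ) (hθ₁ : θ₁ ∈ Set.Icc (0 : ℝ) 1) (hθ₂ : θ₂ ∈ Set.Icc (0 : ℝ) 1)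
    (z₁ z₂ : ℝ) (hz₁ : a ≤ z₁) (hz₂ : a ≤ z₂) :
    Tendsto (fun n : ℕ =>
      ∫ ω,
        ((Real.sqrt ((n : ℝ) * Δ n))⁻¹ * ∑ j : Fin n,
          (if (j : ℕ) < ⌊(n : ℝ) * θ₁⌋₊ then
            ((if z₁ ≤ X n j ω then (1 : ℝ) else 0) - ((P n) {ω' | z₁ ≤ X n j ω'}).toReal)
           else 0)) *
        ((Real.sqrt ((n : ℝ) * Δ n))⁻¹ * ∑ j : Fin n,
          (if (j : ℕ) < ⌊(n : ℝ) * θ₂⌋₊ then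
            ((if z₂ ≤ X n j ω then (1 : ℝ) else 0) - ((P n) {ω' | z₂ ≤ X n j ω'}).toReal)
           else 0)) ∂(P n))
      atTop (nhds (min θ₁ θ₂ * ν (max z₁ z₂))) := by
  set M : ℕ → ℕ := fun n ↦ min ⌊(n : ℝ) * θ₁⌋₊ ⌊(n : ℝ) * θ₂⌋₊
  have hcard (n : ℕ) : #{j : Fin n | (j : ℕ) < M n} = M n := by
    rw [Fin.card_filter_val_lt, min_eq_right]
    exact (min_le_left _ _).trans (Nat.floor_le_of_le (mul_le_of_le_one_right n.cast_nonneg hθ₁.2))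
  have hlim : Tendsto (fun n : ℕ ↦ (M n : ℝ) / n * ν (max z₁ z₂)) atTop
      (nhds (min θ₁ θ₂ * ν (max z₁ z₂))) := by
    have hfloor {θ : ℝ} (hθ : θ ∈ Set.Icc (0 : ℝ) 1) :
        Tendsto (fun n : ℕ ↦ (⌊(n : ℝ) * θ⌋₊ : ℝ) / n) atTop (nhds θ) := by
      refine ((tendsto_nat_floor_mul_div_atTop hθ.1).comp tendsto_natCast_atTop_atTop).congr
        fun n ↦ ?_
      simp [mul_comm]
    refine (((hfloor hθ₁).min (hfloor hθ₂)).mul_const _).congr fun n ↦ ?_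
    simp [M, Nat.cast_min, min_div_div_right n.cast_nonneg]
  have herr : Tendsto (fun n ↦ Δ n * (K + (ν a + K * Δ n) ^ 2)) atTop (nhds 0) := by
    simpa using hΔ0.mul (((tendsto_const_nhds.add (hΔ0.const_mul K)).pow 2).const_add K)
  refine hlim.congr_dist (squeeze_zero' (.of_forall fun _ ↦ dist_nonneg) ?_ herr)
  filter_upwards [eventually_ge_atTop 1] with n hn
  have hnΔ : 0 < (n : ℝ) * Δ n := mul_pos (by exact_mod_cast hn) (hΔpos n)
  simp_rw [mul_mul_mul_comm, integral_const_mul, ← mul_inv, Real.mul_self_sqrt hnΔ.le,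
    ← sum_filter, integral_sum_centered_ite_le_mul_sum (hX n) (hindep n), ← filter_and,
    ← lt_min_iff]
  rw [Real.dist_eq, abs_sub_comm, ← hcard n]
  exact abs_inv_mul_sum_sub_card_div_mul_le (by positivity)
    (by exact_mod_cast (card_le_univ _).trans_eq (Fintype.card_fin n)) (hΔpos n) (by positivity)
    fun j _ ↦ abs_sub_mul_sub_le_of_tail_estimate hνmono (hΔpos n).le
      (fun _ ↦ ENNReal.toReal_nonneg) (htail n hn j) hz₁ hz₂

/-- For a tail-estimate triangular array with rowwise independent entries, the
covariance of the sequential empirical tail process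
`G_n(θ,z) = (nΔ_n)^{-1/2} Σ_{j=1}^{⌊nθ⌋} (1_{X_{n,j} ≥ z} − P_n(X_{n,j} ≥ z))`
(indexed here by `j : Fin n`, `j` being the 0-based index) converges to
`(θ₁ ∧ θ₂) · ν(z₁ ∨ z₂)`. -/
theorem stmt5 (a : ℝ) (ha : 0 < a) (ν : ℝ → ℝ)
    (hν0 : ∀ z, a ≤ z → 0 ≤ ν z) (hνmono : AntitoneOn ν (Set.Ici a))
    (Ω : ℕ → Type*) [∀ n, MeasurableSpace (Ω n)]
    (P : ∀ n, Measure (Ω n)) [∀ n, IsProbabilityMeasure (P n)]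
    (Δ : ℕ → ℝ) (hΔpos : ∀ n, 0 < Δ n)
    (hΔ0 : Tendsto Δ atTop (nhds 0))
    (hnΔ : Tendsto (fun n : ℕ => (n : ℝ) * Δ n) atTop atTop)
    (K : ℝ) (hK : 0 < K)
    (X : ∀ n, Fin n → Ω n → ℝ) (hX : ∀ n j, Measurable (X n j))
    (hindep : ∀ n, ProbabilityTheory.iIndepFun (X n) (P n))
    (htail : ∀ n : ℕ, 1 ≤ n → ∀ j : Fin n, ∀ z, a ≤ z →
      |((P n) {ω | z ≤ X n j ω}).toReal - Δ n * ν z| ≤ K * (Δ n) ^ 2)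
    (θ₁ θ₂ : ℝ) (hθ₁ : θ₁ ∈ Set.Icc (0 : ℝ) 1) (hθ₂ : θ₂ ∈ Set.Icc (0 : ℝ) 1)
    (z₁ z₂ : ℝ) (hz₁ : a ≤ z₁) (hz₂ : a ≤ z₂) :
    Tendsto (fun n : ℕ =>
      ∫ ω,
        ((Real.sqrt ((n : ℝ) * Δ n))⁻¹ * ∑ j : Fin n,
          (if (j : ℕ) < ⌊(n : ℝ) * θ₁⌋₊ then
            ((if z₁ ≤ X n j ω then (1 : ℝ) else 0) - ((P n) {ω' | z₁ ≤ X n j ω'}).toReal)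
           else 0)) *
        ((Real.sqrt ((n : ℝ) * Δ n))⁻¹ * ∑ j : Fin n,
          (if (j : ℕ) < ⌊(n : ℝ) * θ₂⌋₊ then
            ((if z₂ ≤ X n j ω then (1 : ℝ) else 0) - ((P n) {ω' | z₂ ≤ X n j ω'}).toReal)
           else 0)) ∂(P n))
      atTop (nhds (min θ₁ θ₂ * ν (max z₁ z₂))) :=
  stmt5_general a ν hνmono Ω P Δ hΔpos hΔ0 K hK X hX hindep htail θ₁ θ₂ hθ₁ hθ₂ z₁ z₂ hz₁ hz₂
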